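/- arXiv:0712.2129 — 2 statements merged into one kernel-verified Lean document; each statement's English description precedes it below -/
import Mathlib

section
/- Let T(z,u) be the formal power series in z and u satisfying T(z,u) = 1 + u z T(z) T(z,u)^2, where T(z) = T(z,1) satisfies T = 1 + z T^3. Then the coefficient of z^n u^k in T(z,u) equals the number of ternary trees with n internal nodes whose underlying binary subtree (obtained by recursively keeping only the second and third children of nodes reachable from the root through second/third children) has k nodes. -/
/-! Splitting a tree at its root writes a tree of size `n + 1` as a triple of trees of total
size `n`. Hence the size generating function `S` of all trees satisfies `S = 1 + z S^3`, and the
generating function `G` in which each tree is weighted by `u ^ binSize` satisfies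
`G = 1 + u z S G^2`: the first child is an arbitrary tree contributing nothing to the binary
subtree. Both equations determine their solution, because the difference `d` of two solutions of
`f = 1 + z g f^m` satisfies `d = z h d`, which forces `d = 0`. -/

/-- Rooted plane ternary trees. -/
inductive Tern : Type
  | leaf : Tern
  | node : Tern → Tern → Tern → Tern

/-- Number of internal nodes. -/
def Tern.size : Tern → ℕ
  | .leaf => 0
  | .node a b c => 1 + a.size + b.size + c.size

/-- Size of the underlying binary subtree: internal nodes reachable from the
root using only second and third child edges. -/
def Tern.binSize : Tern → ℕ
  | .leaf => 0
  | .node _ b c => 1 + b.binSize + c.binSize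

open PowerSeries

open Finset

def fiberAddEquivSigmaAntidiagonal {α β μ : Type*} [AddMonoid μ] [HasAntidiagonal μ]
    (f : α → μ) (g : β → μ) (n : μ) :
    {x : α × β // f x.1 + g x.2 = n} ≃
      Σ p : antidiagonal n, {a // f a = p.1.1} × {b // g b = p.1.2} where
  toFun x := ⟨⟨(f x.1.1, g x.1.2), mem_antidiagonal.2 x.2⟩, ⟨x.1.1, rfl⟩, ⟨x.1.2, rfl⟩⟩
  invFun y := ⟨(y.2.1, y.2.2), by rw [y.2.1.2, y.2.2.2]; exact mem_antidiagonal.1 y.1.2⟩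
  left_inv _ := rfl
  right_inv := by
    rintro ⟨⟨p, _⟩, ⟨a, ha⟩, ⟨b, hb⟩⟩
    obtain rfl : (f a, g b) = p := Prod.ext ha hb
    rfl

namespace PowerSeries

theorem eq_zero_of_eq_X_mul_mul {R : Type*} [CommSemiring R] {d h : R⟦X⟧}
    (hd : d = X * h * d) : d = 0 := by
  have hpow : ∀ N, d = X ^ N * (h ^ N * d) := by
    intro N
    induction N with
    | zero => simp
    | succ N ih =>
      calc d = X ^ N * (h ^ N * d) := ih
        _ = X ^ N * (h ^ N * (X * h * d)) := by rw [← hd]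
        _ = X ^ (N + 1) * (h ^ (N + 1) * d) := by ring
  ext m
  exact X_pow_dvd_iff.1 ⟨_, hpow (m + 1)⟩ m m.lt_succ_self

theorem eq_of_eq_add_X_mul_mul_pow {R : Type*} [CommRing R] {c g f₁ f₂ : R⟦X⟧} {m : ℕ}
    (h₁ : f₁ = c + X * g * f₁ ^ m) (h₂ : f₂ = c + X * g * f₂ ^ m) : f₁ = f₂ := by
  obtain ⟨q, hq⟩ := sub_dvd_pow_sub_pow f₁ f₂ m
  refine sub_eq_zero.1 (eq_zero_of_eq_X_mul_mul (h := g * q) ?_)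
  calc f₁ - f₂ = X * g * (f₁ ^ m - f₂ ^ m) := by linear_combination h₁ - h₂
    _ = X * (g * q) * (f₁ - f₂) := by rw [hq]; ring

end PowerSeries

namespace Tern

theorem size_eq_zero_iff {t : Tern} : t.size = 0 ↔ t = leaf := by
  cases t <;> simp [size]

theorem finite_setOf_size_le (n : ℕ) : {t : Tern | t.size ≤ n}.Finite := by
  induction n with
  | zero =>
    refine (Set.finite_singleton leaf).subset ?_
    rintro (_ | _) h
    · rfl
    · simp [size] at h
  | succ n ih =>
    refine (((ih.prod (ih.prod ih)).image fun x => node x.1 x.2.1 x.2.2).insert leaf).subset ?_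
    rintro (_ | ⟨a, b, c⟩) h
    · exact Set.mem_insert _ _
    · simp only [size, Set.mem_ofPred_eq] at h
      refine Set.mem_insert_of_mem _ ⟨(a, b, c), ?_, rfl⟩
      simp only [Set.mem_prod, Set.mem_ofPred_eq]
      omega

instance (n : ℕ) : Finite {t : Tern // t.size = n} :=
  ((finite_setOf_size_le n).subset fun _ h => le_of_eq h).to_subtype

noncomputable instance (n : ℕ) : Fintype {t : Tern // t.size = n} := Fintype.ofFinite _

def sizeSuccEquiv (n : ℕ) : {t : Tern // t.size = n + 1} ≃
    {x : Tern × Tern × Tern // x.1.size + (x.2.1.size + x.2.2.size) = n} where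
  toFun
    | ⟨leaf, h⟩ => by simp [size] at h
    | ⟨node a b c, h⟩ => ⟨(a, b, c), by simp only [size] at h; dsimp only; omega⟩
  invFun x := ⟨node x.1.1 x.1.2.1 x.1.2.2, by have := x.2; simp only [size]; omega⟩
  left_inv
    | ⟨leaf, h⟩ => by simp [size] at h
    | ⟨node _ _ _, _⟩ => rfl
  right_inv _ := rfl

def sizeSuccEquivSigma (n : ℕ) : {t : Tern // t.size = n + 1} ≃
    Σ p : antidiagonal n, {a : Tern // a.size = p.1.1} ×
      Σ q : antidiagonal p.1.2, {b : Tern // b.size = q.1.1} × {c : Tern // c.size = q.1.2} :=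
  (sizeSuccEquiv n).trans <|
    (fiberAddEquivSigmaAntidiagonal size (fun y : Tern × Tern => y.1.size + y.2.size) n).trans <|
      Equiv.sigmaCongrRight fun p =>
        (Equiv.refl _).prodCongr (fiberAddEquivSigmaAntidiagonal size size p.1.2)

theorem sum_size_succ {M : Type*} [AddCommMonoid M] (n : ℕ) (Φ : Tern → M) :
    ∑ t : {t : Tern // t.size = n + 1}, Φ t =
      ∑ p ∈ antidiagonal n, ∑ a : {a : Tern // a.size = p.1}, ∑ q ∈ antidiagonal p.2,
        ∑ b : {b : Tern // b.size = q.1}, ∑ c : {c : Tern // c.size = q.2}, Φ (node a b c) := by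
  rw [Fintype.sum_equiv (sizeSuccEquivSigma n) _
    (fun y => Φ (node y.2.1 y.2.2.2.1 y.2.2.2.2))]
  · simp [Fintype.sum_sigma, Fintype.sum_prod_type, ← Finset.sum_coe_sort (antidiagonal _)]
  · rintro ⟨_ | ⟨a, b, c⟩, h⟩
    · simp [size] at h
    · rfl

variable {R : Type*}

noncomputable def gf [Semiring R] (φ : Tern → R) : R⟦X⟧ :=
  mk fun n => ∑ t : {t : Tern // t.size = n}, φ t

theorem map_gf {S : Type*} [Semiring R] [Semiring S] (f : R →+* S) (φ : Tern → R) :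
    map f (gf φ) = gf (f ∘ φ) := by
  ext n
  simp [gf]

theorem gf_eq_of_node [CommSemiring R] {φ ψ : Tern → R} (r : R)
    (h : ∀ a b c, φ (node a b c) = r * ψ a * φ b * φ c) :
    gf φ = C (φ leaf) + X * C r * gf ψ * gf φ ^ 2 := by
  ext (_ | n)
  · have : Subsingleton {t : Tern // t.size = 0} :=
      ⟨fun a b => Subtype.ext ((size_eq_zero_iff.1 a.2).trans (size_eq_zero_iff.1 b.2).symm)⟩
    rw [map_add, mul_assoc, mul_assoc, coeff_zero_X_mul, add_zero, coeff_zero_C, gf, coeff_mk]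
    exact Fintype.sum_subsingleton (fun t : {t : Tern // t.size = 0} => φ t) ⟨leaf, rfl⟩
  · rw [map_add, mul_assoc, mul_assoc, coeff_succ_X_mul, coeff_C_mul, coeff_C,
      if_neg n.succ_ne_zero, zero_add, sq, coeff_mul]
    simp only [gf, coeff_mk, coeff_mul, sum_size_succ, h, Finset.sum_mul_sum]
    simp only [Finset.mul_sum, mul_assoc]

theorem coeff_coeff_gf_X_pow_binSize [Semiring R] (n k : ℕ) :
    (coeff n (gf fun t => (Polynomial.X : Polynomial R) ^ t.binSize)).coeff k =
      Nat.card {t : Tern // t.size = n ∧ t.binSize = k} := by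
  rw [← Nat.card_congr (Equiv.subtypeSubtypeEquivSubtypeInter _ _), Nat.card_eq_fintype_card,
    Fintype.card_subtype]
  simp [gf, Polynomial.finsetSum_coeff, Polynomial.coeff_X_pow, eq_comm]

end Tern

/-- Let `T(z,u)` (modeled as a power series in `z` with coefficients that are
polynomials in `u`) satisfy `T(z,u) = 1 + u z T(z) T(z,u)^2`, where
`T(z) = T(z,1)` satisfies `T = 1 + z T^3`.  Then the coefficient of `z^n u^k`
in `T(z,u)` equals the number of ternary trees with `n` internal nodes whose
underlying binary subtree has `k` nodes. -/
theorem bivariate_binary_subtree_gf (T : PowerSeries ℚ)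
    (hT : T = 1 + PowerSeries.X * T ^ 3)
    (F : PowerSeries (Polynomial ℚ))
    (hF : F = 1 + PowerSeries.C Polynomial.X * PowerSeries.X *
      PowerSeries.map (Polynomial.C) T * F ^ 2) :
    ∀ n k : ℕ,
      Polynomial.coeff (PowerSeries.coeff n F) k =
        Nat.card {t : Tern // t.size = n ∧ t.binSize = k} := by
  have hS := Tern.gf_eq_of_node (φ := fun _ => (1 : ℚ)) (ψ := fun _ => 1) 1 fun _ _ _ => by ring
  have hG := Tern.gf_eq_of_node (φ := fun t => Polynomial.X ^ t.binSize)
    (ψ := Polynomial.C ∘ fun _ => (1 : ℚ)) Polynomial.X fun _ _ _ => by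
      simp only [Tern.binSize, Function.comp_apply, map_one]; ring
  simp only [map_one, Tern.binSize, pow_zero] at hS hG
  have hTS : T = Tern.gf fun _ => 1 :=
    eq_of_eq_add_X_mul_mul_pow (c := 1) (g := 1) (m := 3)
      (by linear_combination hT) (by linear_combination hS)
  rw [← Tern.map_gf, ← hTS] at hG
  have hFG : F = Tern.gf fun t => Polynomial.X ^ t.binSize :=
    eq_of_eq_add_X_mul_mul_pow (c := 1) (g := C Polynomial.X * map Polynomial.C T) (m := 2)
      (by linear_combination hF) (by linear_combination hG)
  intro n k
  rw [hFG, Tern.coeff_coeff_gf_X_pow_binSize]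
end

section
/- Let T satisfy T = 1 + zT^3 as a formal power series. Define D_1(z) = z T^3 / (1 - 2 z T^2) as a formal power series (the denominator has nonzero constant term). Then D_1(z) = \partial_u T_1(z,u)|_{u=1}, where T_1(z,u) is the formal power series satisfying T_1(z,u) = 1 + z u T_1(z,u)^2 T(z). -/
/-!
Evaluating `u` at `1` turns the equation of `T₁` into `S = 1 + z S² T`, which `T` also satisfies
and which has only one power-series solution; so `T₁(z,1) = T`. Differentiating the equation of
`T₁` in `u` at `u = 1` coefficientwise, a derivation over evaluation at `1`, gives
`D₁ = z T³ + 2 z T² D₁`.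
-/

open PowerSeries
open scoped Polynomial

namespace PowerSeries

variable {R : Type*} [CommRing R]

theorem eq_of_eq_one_add_X_mul_sq_mul {T f g : R⟦X⟧}
    (hf : f = 1 + X * f ^ 2 * T) (hg : g = 1 + X * g ^ 2 * T) : f = g := by
  have hprod : (f - g) * (1 - X * (f + g) * T) = 0 := by linear_combination hf - hg
  have hunit : IsUnit (1 - X * (f + g) * T) := isUnit_iff_constantCoeff.mpr (by simp)
  exact sub_eq_zero.mp ((hunit.mul_left_eq_zero).mp hprod)

/-- `∂_u f(z,u)|_{u=a}`, where `u` is the polynomial variable of the coefficients. -/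
noncomputable def derivEval (a : R) (f : R[X]⟦X⟧) : R⟦X⟧ :=
  mk fun n => (coeff n f).derivative.eval a

variable (a : R)

@[simp]
theorem coeff_derivEval (f : R[X]⟦X⟧) (n : ℕ) :
    coeff n (derivEval a f) = (coeff n f).derivative.eval a :=
  coeff_mk _ _

@[simp]
theorem derivEval_add (f g : R[X]⟦X⟧) :
    derivEval a (f + g) = derivEval a f + derivEval a g := by
  ext n; simp

theorem derivEval_mul (f g : R[X]⟦X⟧) :
    derivEval a (f * g) =
      derivEval a f * map (Polynomial.evalRingHom a) g +
        map (Polynomial.evalRingHom a) f * derivEval a g := by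
  ext n
  simp [coeff_mul, Polynomial.eval_finsetSum, Finset.sum_add_distrib]

@[simp]
theorem derivEval_C (p : R[X]) : derivEval a (C p) = C (p.derivative.eval a) := by
  ext n; simp [coeff_C]; split_ifs <;> simp

@[simp]
theorem derivEval_one : derivEval a (1 : R[X]⟦X⟧) = 0 := by
  simpa using derivEval_C a 1

theorem derivEval_pow (f : R[X]⟦X⟧) (n : ℕ) :
    derivEval a (f ^ n) = n * map (Polynomial.evalRingHom a) f ^ (n - 1) * derivEval a f := by
  induction n with
  | zero => simp
  | succ n ih =>
    rw [pow_succ, derivEval_mul, ih, map_pow]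
    cases n <;> simp; ring

@[simp]
theorem derivEval_X : derivEval a (X : R[X]⟦X⟧) = 0 := by
  ext n; simp [coeff_X]; split_ifs <;> simp

@[simp]
theorem derivEval_map_C (f : R⟦X⟧) : derivEval a (map Polynomial.C f) = 0 := by
  ext n; simp

@[simp]
theorem map_evalRingHom_map_C (f : R⟦X⟧) :
    map (Polynomial.evalRingHom a) (map Polynomial.C f) = f := by
  ext n; simp

end PowerSeries

/-- Let `T = 1 + zT^3` and let `T₁(z,u)` (a power series in `z` with polynomial
coefficients in `u`) satisfy `T₁(z,u) = 1 + z u T₁(z,u)^2 T(z)`.  Then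
`D₁(z) = z T^3 / (1 - 2 z T^2)` equals `∂_u T₁(z,u)|_{u=1}`. -/
theorem distance_one_gf (T : PowerSeries ℚ)
    (hT : T = 1 + PowerSeries.X * T ^ 3)
    (T1 : PowerSeries (Polynomial ℚ))
    (hT1 : T1 = 1 + PowerSeries.X * PowerSeries.C Polynomial.X *
      T1 ^ 2 * PowerSeries.map (Polynomial.C) T) :
    PowerSeries.X * T ^ 3 * (1 - 2 * PowerSeries.X * T ^ 2)⁻¹ =
      PowerSeries.mk (fun n =>
        Polynomial.eval 1 (Polynomial.derivative
          (PowerSeries.coeff n T1))) := by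
  have hev : map (Polynomial.evalRingHom 1) T1 = T := by
    refine eq_of_eq_one_add_X_mul_sq_mul (T := T) ?_ (by linear_combination hT)
    conv_lhs => rw [hT1]
    simp
  have hderiv : derivEval 1 T1 = X * T ^ 3 + 2 * X * T ^ 2 * derivEval 1 T1 := by
    conv_lhs => rw [hT1]
    simp [derivEval_mul, derivEval_pow, hev]
    ring
  rw [eq_comm, eq_mul_inv_iff_mul_eq (by simp)]
  change derivEval 1 T1 * _ = _
  linear_combination hderiv
end
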